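/- With the Euclidean representation û (where ŝ for 1-dimensional s satisfy ‖ŝ‖² = [n]-1, ⟨ŝ,t̂⟩ = -1 for s ≠ t, Σ ŝ = 0, and û = Σ_{s⊆u} ŝ), for any k-dimensional subspace x of V (n > 2k ≥ 6), the sum of ẑ over all k-dimensional subspaces z with dim(x ∩ z) = k - 1 equals θ₁ x̂, where θ₁ = q²[k-1][n-k-1] - 1. -/

import Mathlib

/-- The Gaussian number `[m] = (q^m - 1)/(q - 1)` as a real number. -/
noncomputable def gaussR (q m : ℕ) : ℝ := ((q : ℝ) ^ m - 1) / ((q : ℝ) - 1)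

/-- The vector `û ∈ E` attached to a subspace `u`: the sum of `ŝ` over all
one-dimensional subspaces `s ⊆ u`. -/
noncomputable def uhat {F V : Type*} [Field F] [AddCommGroup V] [Module F V]
    {E : Type*} [NormedAddCommGroup E] [InnerProductSpace ℝ E]
    (shat : {s : Submodule F V // Module.finrank F s = 1} → E)
    (u : Submodule F V) : E :=
  ∑ᶠ (s : {s : Submodule F V // Module.finrank F s = 1}) (_ : s.1 ≤ u), shat s

/-!
Expanding every `ẑ` as a sum of `ŝ` gives `∑ ẑ = ∑_s c(s) ŝ`, where `c(s)` counts the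
`k`-spaces `z ∋ s` adjacent to `x`. If `s ⊄ x`, then `z ↦ x ⊓ z` is a bijection onto the
hyperplanes of `x`, so `c(s) = [k]`. If `s ⊆ x`, then `z` is determined by the hyperplane
`w = x ⊓ z ∋ s` of `x` (`[k-1]` choices) together with a line of `V/w` other than `x/w`
(`q[n-k]` choices). As `∑ ŝ = 0`, the constant part `[k]` drops out, leaving
`∑ ẑ = ([k-1] q [n-k] - [k]) x̂ = θ₁ x̂`.
-/

open Module Submodule Finset

theorem Nat.card_eq_card_mul_of_card_fiber_eq {α β : Type*} [Finite α] [Finite β] (f : α → β)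
    {c : ℕ} (h : ∀ b, Nat.card {a // f a = b} = c) : Nat.card α = Nat.card β * c := by
  have := Fintype.ofFinite β
  rw [← Nat.card_congr (Equiv.sigmaFiberEquiv f), Nat.card_sigma,
    Finset.sum_congr rfl fun b _ ↦ h b, sum_const, Finset.card_univ, smul_eq_mul,
    Nat.card_eq_fintype_card]

theorem gaussR_eq_geom_sum {q : ℕ} (hq : q ≠ 1) (m : ℕ) :
    gaussR q m = ∑ i ∈ range m, (q : ℝ) ^ i := by
  rw [gaussR, geom_sum_eq (by exact_mod_cast hq)]

theorem gaussR_sub_one_mul_gaussR {q : ℕ} (hq : q ≠ 1) {k n : ℕ} (hk : 1 ≤ k) (hkn : k < n) :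
    gaussR q (k - 1) * (q * gaussR q (n - k)) =
      gaussR q k + ((q : ℝ) ^ 2 * gaussR q (k - 1) * gaussR q (n - k - 1) - 1) := by
  obtain ⟨a, rfl⟩ : ∃ a, k = a + 1 := ⟨k - 1, by omega⟩
  obtain ⟨b, hb⟩ : ∃ b, n - (a + 1) = b + 1 := ⟨n - a - 2, by omega⟩
  simp only [gaussR_eq_geom_sum hq, hb, Nat.add_sub_cancel, geom_sum_succ]
  ring

namespace Submodule

variable {F V : Type*} [Field F] [AddCommGroup V] [Module F V]

instance finite_of_finite [Finite F] [FiniteDimensional F V] : Finite (Submodule F V) :=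
  have : Finite V := Module.finite_of_finite F
  Finite.of_injective _ SetLike.coe_injective

theorem card_subtype_le_and (x : Submodule F V) (Q : Submodule F V → Prop) :
    Nat.card {w : Submodule F V // w ≤ x ∧ Q w} =
      Nat.card {w : Submodule F x // Q (map x.subtype w)} :=
  Nat.card_congr <| ((Equiv.subtypeSubtypeEquivSubtypeInter (· ≤ x) Q).symm.trans
    ((MapSubtype.orderIso x).toEquiv.subtypeEquiv fun _ ↦ Iff.rfl).symm)

theorem card_subtype_ge_and (p : Submodule F V) (Q : Submodule F V → Prop) :
    Nat.card {z : Submodule F V // p ≤ z ∧ Q z} =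
      Nat.card {ℓ : Submodule F (V ⧸ p) // Q (comap p.mkQ ℓ)} :=
  Nat.card_congr <| ((Equiv.subtypeSubtypeEquivSubtypeInter (p ≤ ·) Q).symm.trans
    ((comapMkQRelIso p).toEquiv.subtypeEquiv fun _ ↦ Iff.rfl).symm)

theorem finrank_comap_mkQ [FiniteDimensional F V] (p : Submodule F V)
    (ℓ : Submodule F (V ⧸ p)) : finrank F (comap p.mkQ ℓ) = finrank F ℓ + finrank F p := by
  have hrange : map p.mkQ (comap p.mkQ ℓ) = ℓ := map_comap_eq_self (by simp)
  have hker : finrank F (comap (comap p.mkQ ℓ).subtype p) = finrank F p :=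
    (comapSubtypeEquivOfLe (le_comap_mkQ p ℓ)).finrank_eq
  have := LinearMap.finrank_range_add_finrank_ker (p.mkQ.domRestrict (comap p.mkQ ℓ))
  rw [LinearMap.range_domRestrict, LinearMap.ker_domRestrict, ker_mkQ, hrange, hker] at this
  exact this.symm

theorem finrank_map_mkQ_add_finrank [FiniteDimensional F V] {p z : Submodule F V} (h : p ≤ z) :
    finrank F (map p.mkQ z) + finrank F p = finrank F z := by
  rw [← finrank_comap_mkQ, comap_map_mkQ, sup_eq_right.mpr h]

theorem finrank_sup_eq_of_not_le [FiniteDimensional F V] {s w : Submodule F V}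
    (hs : finrank F s = 1) (h : ¬ s ≤ w) : finrank F ↥(w ⊔ s) = finrank F w + 1 := by
  have hdisj : w ⊓ s = ⊥ := by
    rw [inf_comm, ← disjoint_iff]
    exact (isAtom_iff_finrank_eq_one.mpr hs).not_le_iff_disjoint.mp h
  have := finrank_sup_add_finrank_inf_eq w s
  rwa [hdisj, finrank_bot, add_zero, hs] at this

section Counting

variable [Finite F]

local notation "q" => Nat.card F

theorem card_finrank_eq_one :
    Nat.card {ℓ : Submodule F V // finrank F ℓ = 1} = ∑ i ∈ range (finrank F V), q ^ i := by
  rw [← Nat.card_congr (Projectivization.equivSubmodule F V)]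
  exact Projectivization.card_of_finrank F V rfl

variable [FiniteDimensional F V]

theorem card_finrank_eq_one_ne {ℓ₀ : Submodule F V} (h : finrank F ℓ₀ = 1) :
    Nat.card {ℓ : Submodule F V // finrank F ℓ = 1 ∧ ℓ ≠ ℓ₀} =
      q * ∑ i ∈ range (finrank F V - 1), q ^ i := by
  obtain ⟨m, hm⟩ : ∃ m, finrank F V = m + 1 :=
    ⟨finrank F V - 1, by have := h ▸ finrank_le ℓ₀; omega⟩
  have := Set.ncard_sdiff_singleton_add_one (s := {ℓ : Submodule F V | finrank F ℓ = 1}) h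
    (Set.toFinite _)
  rw [← Nat.card_coe_set_eq, ← Nat.card_coe_set_eq] at this
  change Nat.card {ℓ : Submodule F V // finrank F ℓ = 1 ∧ ℓ ≠ ℓ₀} + 1 =
    Nat.card {ℓ : Submodule F V // finrank F ℓ = 1} at this
  rw [card_finrank_eq_one, hm, geom_sum_succ] at this
  rw [hm, Nat.add_sub_cancel]
  omega

theorem card_finrank_add_one_eq :
    Nat.card {w : Submodule F V // finrank F w + 1 = finrank F V} =
      ∑ i ∈ range (finrank F V), q ^ i := by
  have hdual := card_finrank_eq_one (F := F) (V := Dual F V)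
  rw [Subspace.dual_finrank_eq] at hdual
  rw [← hdual]
  refine Nat.card_congr <| (Subspace.orderIsoFiniteDimensional.toEquiv.trans
    OrderDual.ofDual).subtypeEquiv fun w ↦ ?_
  have := Subspace.finrank_add_finrank_dualAnnihilator_eq w
  change _ ↔ finrank F w.dualAnnihilator = 1
  omega

theorem card_le_finrank_add_one_eq (x : Submodule F V) :
    Nat.card {w : Submodule F V // w ≤ x ∧ finrank F w + 1 = finrank F x} =
      ∑ i ∈ range (finrank F x), q ^ i := by
  rw [card_subtype_le_and, ← card_finrank_add_one_eq]
  simp only [finrank_map_subtype_eq]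

theorem card_ge_le_finrank_add_one_eq {p x : Submodule F V} (hpx : p ≤ x) :
    Nat.card {w : Submodule F V // p ≤ w ∧ w ≤ x ∧ finrank F w + 1 = finrank F x} =
      ∑ i ∈ range (finrank F x - finrank F p), q ^ i := by
  have hx := finrank_map_mkQ_add_finrank hpx
  have hcomap : comap p.mkQ (map p.mkQ x) = x := by rw [comap_map_mkQ, sup_eq_right.mpr hpx]
  rw [card_subtype_ge_and, show finrank F x - finrank F p = finrank F (map p.mkQ x) by omega,
    ← card_le_finrank_add_one_eq]
  refine Nat.card_congr <| Equiv.subtypeEquivRight fun ℓ ↦ ?_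
  rw [finrank_comap_mkQ, ← LinearMap.comap_le_comap_iff (range_mkQ p), hcomap]
  exact and_congr Iff.rfl (by omega)

theorem card_finrank_eq_inf_eq {w x : Submodule F V} (hwx : w ≤ x)
    (hw : finrank F w + 1 = finrank F x) :
    Nat.card {z : Submodule F V // finrank F z = finrank F x ∧ x ⊓ z = w} =
      q * ∑ i ∈ range (finrank F V - finrank F x), q ^ i := by
  have hx := finrank_map_mkQ_add_finrank hwx
  have hxbar : finrank F (map w.mkQ x) = 1 := by omega
  have hcomap : comap w.mkQ (map w.mkQ x) = x := by rw [comap_map_mkQ, sup_eq_right.mpr hwx]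
  have hquot := finrank_quotient_add_finrank w
  have hdim : finrank F V - finrank F x = finrank F (V ⧸ w) - 1 := by omega
  rw [hdim, ← card_finrank_eq_one_ne hxbar]
  have hle : ∀ z : Submodule F V, finrank F z = finrank F x ∧ x ⊓ z = w ↔
      w ≤ z ∧ finrank F z = finrank F x ∧ x ⊓ z = w :=
    fun z ↦ ⟨fun h ↦ ⟨h.2 ▸ inf_le_right, h⟩, And.right⟩
  rw [Nat.card_congr (Equiv.subtypeEquivRight hle), card_subtype_ge_and]
  refine Nat.card_congr <| Equiv.subtypeEquivRight fun ℓ ↦ ?_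
  rw [finrank_comap_mkQ, show finrank F ℓ + finrank F w = finrank F x ↔ finrank F ℓ = 1 by omega]
  refine and_congr_right fun hℓ ↦ ?_
  have hℓ' := isAtom_iff_finrank_eq_one.mpr hℓ
  have hinf : x ⊓ comap w.mkQ ℓ = comap w.mkQ (map w.mkQ x ⊓ ℓ) := by rw [comap_inf, hcomap]
  have hbot : comap w.mkQ ⊥ = w := by rw [comap_bot, ker_mkQ]
  calc x ⊓ comap w.mkQ ℓ = w ↔ comap w.mkQ (map w.mkQ x ⊓ ℓ) = comap w.mkQ ⊥ := by
        rw [hinf, hbot]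
    _ ↔ Disjoint ℓ (map w.mkQ x) := by
        rw [(LinearMap.comap_injective (range_mkQ w)).eq_iff, ← disjoint_iff, disjoint_comm]
    _ ↔ ℓ ≠ map w.mkQ x := by
        rw [← hℓ'.not_le_iff_disjoint, (isAtom_iff_finrank_eq_one.mpr hxbar).le_iff_eq hℓ'.1]

theorem card_adjacent_containing_of_not_le {s x : Submodule F V} (hs : finrank F s = 1)
    (hsx : ¬ s ≤ x) {k : ℕ} (hx : finrank F x = k) :
    Nat.card {z : Submodule F V //
        (finrank F z = k ∧ finrank F (x ⊓ z : Submodule F V) = k - 1) ∧ s ≤ z} =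
      ∑ i ∈ range k, q ^ i := by
  subst hx
  have hdisj : s ⊓ x = ⊥ :=
    disjoint_iff.mp ((isAtom_iff_finrank_eq_one.mpr hs).not_le_iff_disjoint.mp hsx)
  have hinf_sup : ∀ w ≤ x, x ⊓ (w ⊔ s) = w := fun w hw ↦ by
    rw [inf_comm, sup_inf_assoc_of_le s hw, hdisj, sup_bot_eq]
  have hrank : ∀ w ≤ x, finrank F ↥(w ⊔ s) = finrank F w + 1 := fun w hw ↦
    finrank_sup_eq_of_not_le hs fun h ↦ hsx (h.trans hw)
  rw [← card_le_finrank_add_one_eq x]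
  refine Nat.card_congr
    { toFun := fun z ↦ ⟨x ⊓ z.1, inf_le_left, by
        have := hs ▸ finrank_mono z.2.2
        omega⟩
      invFun := fun w ↦ ⟨w.1 ⊔ s, ⟨by rw [hrank w w.2.1, w.2.2], by
        rw [hinf_sup w w.2.1]
        omega⟩, le_sup_right⟩
      left_inv := fun z ↦ Subtype.ext <| eq_of_le_of_finrank_eq (sup_le inf_le_right z.2.2) (by
        have := hs ▸ finrank_mono z.2.2
        rw [hrank _ inf_le_left]
        omega)
      right_inv := fun w ↦ Subtype.ext (hinf_sup w w.2.1) }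

theorem card_adjacent_containing_of_le {s x : Submodule F V} (hs : finrank F s = 1)
    (hsx : s ≤ x) {k : ℕ} (hx : finrank F x = k) :
    Nat.card {z : Submodule F V //
        (finrank F z = k ∧ finrank F (x ⊓ z : Submodule F V) = k - 1) ∧ s ≤ z} =
      (∑ i ∈ range (k - 1), q ^ i) * (q * ∑ i ∈ range (finrank F V - k), q ^ i) := by
  subst hx
  have hk := hs ▸ finrank_mono hsx
  have hW := card_ge_le_finrank_add_one_eq hsx
  rw [hs] at hW
  rw [← hW]
  refine Nat.card_eq_card_mul_of_card_fiber_eq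
    (fun z ↦ ⟨x ⊓ z.1, le_inf hsx z.2.2, inf_le_left, by omega⟩) fun w ↦ ?_
  rw [← card_finrank_eq_inf_eq w.2.2.1 w.2.2.2]
  refine Nat.card_congr <| (Equiv.subtypeEquivRight fun z ↦ Subtype.ext_iff).trans <|
    (Equiv.subtypeSubtypeEquivSubtypeInter _ (x ⊓ · = w.1)).trans <|
    Equiv.subtypeEquivRight fun z ↦ ⟨fun h ↦ ⟨h.1.1.1, h.2⟩, fun h ↦ ⟨⟨⟨h.1, ?_⟩, ?_⟩, h.2⟩⟩
  · rw [h.2]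
    omega
  · exact w.2.1.trans (h.2 ▸ inf_le_right)

open scoped Classical in
theorem card_adjacent_containing_eq {s x : Submodule F V} (hs : finrank F s = 1) {k : ℕ}
    (hx : finrank F x = k) (hkV : k < finrank F V) :
    (Nat.card {z : Submodule F V //
        (finrank F z = k ∧ finrank F (x ⊓ z : Submodule F V) = k - 1) ∧ s ≤ z} : ℝ) =
      gaussR q k + if s ≤ x then
        (q : ℝ) ^ 2 * gaussR q (k - 1) * gaussR q (finrank F V - k - 1) - 1 else 0 := by
  have hq : q ≠ 1 := Finite.one_lt_card.ne'
  split_ifs with hsx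
  · rw [card_adjacent_containing_of_le hs hsx hx, ← gaussR_sub_one_mul_gaussR hq
      (hx ▸ hs ▸ finrank_mono hsx) hkV]
    push_cast
    simp only [gaussR_eq_geom_sum hq]
  · rw [card_adjacent_containing_of_not_le hs hsx hx, gaussR_eq_geom_sum hq, add_zero]
    push_cast
    rfl

end Counting

end Submodule

theorem finsum_uhat_eq_finsum_card_smul {F V : Type*} [Field F] [AddCommGroup V] [Module F V]
    [Finite F] [FiniteDimensional F V]
    {E : Type*} [NormedAddCommGroup E] [InnerProductSpace ℝ E]
    (shat : {s : Submodule F V // finrank F s = 1} → E) (P : Submodule F V → Prop) :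
    ∑ᶠ (z : Submodule F V) (_ : P z), uhat shat z =
      ∑ᶠ s, Nat.card {z : Submodule F V // P z ∧ s.1 ≤ z} • shat s := by
  classical
  have := Fintype.ofFinite (Submodule F V)
  have := Fintype.ofFinite {s : Submodule F V // finrank F s = 1}
  simp only [uhat, finsum_eq_if, finsum_eq_sum_of_fintype]
  calc ∑ z, (if P z then ∑ s, if s.1 ≤ z then shat s else 0 else 0)
      = ∑ z, ∑ s, if P z ∧ s.1 ≤ z then shat s else 0 :=
        sum_congr rfl fun z _ ↦ by split_ifs with h <;> simp [h]
    _ = ∑ s, ∑ z, if P z ∧ s.1 ≤ z then shat s else 0 := sum_comm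
    _ = _ := sum_congr rfl fun s _ ↦ by
        rw [sum_ite, sum_const_zero, add_zero, sum_const, Nat.card_eq_fintype_card,
          Fintype.card_subtype]

theorem stmt19_general {F V : Type*} [Field F] [Fintype F] [AddCommGroup V] [Module F V]
    [FiniteDimensional F V] {q n k : ℕ} (hq : Fintype.card F = q)
    (hn : Module.finrank F V = n) (hnk : n > 2 * k)
    {E : Type*} [NormedAddCommGroup E] [InnerProductSpace ℝ E]
    (shat : {s : Submodule F V // Module.finrank F s = 1} → E)
    (hsum : ∑ᶠ s, shat s = 0)
    (x : Submodule F V) (hx : Module.finrank F x = k) :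
    (∑ᶠ (z : Submodule F V) (_ : Module.finrank F z = k ∧
        Module.finrank F (x ⊓ z : Submodule F V) = k - 1), uhat shat z)
      = ((q : ℝ) ^ 2 * gaussR q (k - 1) * gaussR q (n - k - 1) - 1) • uhat shat x := by
  classical
  rw [← Nat.card_eq_fintype_card] at hq
  subst hq hn
  calc _ = ∑ᶠ s : {s : Submodule F V // finrank F s = 1}, (gaussR (Nat.card F) k • shat s +
        if s.1 ≤ x then ((Nat.card F : ℝ) ^ 2 * gaussR (Nat.card F) (k - 1) *
          gaussR (Nat.card F) (finrank F V - k - 1) - 1) • shat s else 0) := by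
        rw [finsum_uhat_eq_finsum_card_smul]
        refine finsum_congr fun s ↦ ?_
        rw [← Nat.cast_smul_eq_nsmul ℝ, card_adjacent_containing_eq s.2 hx (by omega), add_smul,
          ite_smul, zero_smul]
    _ = gaussR (Nat.card F) k • ∑ᶠ s, shat s + ((Nat.card F : ℝ) ^ 2 *
          gaussR (Nat.card F) (k - 1) * gaussR (Nat.card F) (finrank F V - k - 1) - 1) •
          uhat shat x := by
        rw [finsum_add_distrib (Set.toFinite _) (Set.toFinite _), smul_finsum]
        simp only [uhat, finsum_eq_if, smul_finsum, smul_ite, smul_zero]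
    _ = _ := by rw [hsum, smul_zero, zero_add]

theorem stmt19 {F V : Type*} [Field F] [Fintype F] [AddCommGroup V] [Module F V]
    [FiniteDimensional F V] {q n k : ℕ} (hq : Fintype.card F = q)
    (hn : Module.finrank F V = n) (hnk : n > 2 * k) (hk : 2 * k ≥ 6)
    {E : Type*} [NormedAddCommGroup E] [InnerProductSpace ℝ E]
    (shat : {s : Submodule F V // Module.finrank F s = 1} → E)
    (hspan : Submodule.span ℝ (Set.range shat) = ⊤)
    (hnorm : ∀ s, ‖shat s‖ ^ 2 = gaussR q n - 1)
    (hinner : ∀ s t, s ≠ t → (inner ℝ (shat s) (shat t) : ℝ) = -1)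
    (hsum : ∑ᶠ s, shat s = 0)
    (x : Submodule F V) (hx : Module.finrank F x = k) :
    (∑ᶠ (z : Submodule F V) (_ : Module.finrank F z = k ∧
        Module.finrank F (x ⊓ z : Submodule F V) = k - 1), uhat shat z)
      = ((q : ℝ) ^ 2 * gaussR q (k - 1) * gaussR q (n - k - 1) - 1) • uhat shat x :=
  stmt19_general hq hn hnk shat hsum x hx
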